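/- Let A(x, y) = Σ_{s,t} a_{s,t} x^s y^t be a polynomial with integer coefficients, and for integers k ≥ 0 and i ≥ 0 define A_{k,i} := Σ_{s=0}^{k} Σ_{t=0}^{k−s} (−1)^{t+i} · C(k−s, t) · a_{s,t+i}, where C(m, t) denotes the binomial coefficient. If k > deg_x(A) (the maximum s such that a_{s,t} ≠ 0 for some t) and i > 0, then A_{k−1,i} = A_{k,i−1} − A_{k−1,i−1}. -/

import Mathlib

/-- For a bivariate integer polynomial `A` (in the variables `x = X 0`, `y = X 1`)
with coefficients `a_{s,t}`, the quantity
`A_{k,i} = Σ_{s=0}^{k} Σ_{t=0}^{k-s} (−1)^(t+i) C(k−s, t) a_{s,t+i}`. -/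
noncomputable def Asum (A : MvPolynomial (Fin 2) ℤ) (k i : ℕ) : ℤ :=
  ∑ s ∈ Finset.range (k + 1), ∑ t ∈ Finset.range (k - s + 1),
    (-1 : ℤ) ^ (t + i) * (Nat.choose (k - s) t : ℤ) *
      MvPolynomial.coeff (Finsupp.single 0 s + Finsupp.single 1 (t + i)) A

/-! The inner sum of `Asum`, `Σ_{t ≤ M} (-1)^(t+j) C(M,t) f(t+j)`, is up to sign the `M`-th forward
difference of `f` at `j`, so it satisfies Pascal's rule in `M`. Applying that rule termwise to the outer sum gives the
recurrence, once the term `s = k`, built from coefficients of `x`-degree `k > deg_x A`, drops out. -/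

open Finset

theorem MvPolynomial.coeff_eq_zero_of_degreeOf_lt {R σ : Type*} [CommSemiring R]
    {p : MvPolynomial σ R} {i : σ} {m : σ →₀ ℕ} (h : p.degreeOf i < m i) : p.coeff m = 0 := by
  by_contra hm
  exact (monomial_le_degreeOf i (mem_support_iff.mpr hm)).not_gt h

section SignedBinomialSum

variable {R : Type*} [CommRing R]

def signedBinomialSum (f : ℕ → R) (M j : ℕ) : R :=
  ∑ t ∈ range (M + 1), (-1) ^ (t + j) * (M.choose t : R) * f (t + j)

theorem signedBinomialSum_eq_fwdDiff_iter (f : ℕ → R) (M j : ℕ) :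
    signedBinomialSum f M j = (-1) ^ (M + j) * (fwdDiff 1)^[M] f j := by
  rw [fwdDiff_iter_eq_sum_shift, signedBinomialSum, mul_sum]
  refine sum_congr rfl fun t ht => ?_
  obtain ⟨d, rfl⟩ := Nat.exists_eq_add_of_le (mem_range_succ_iff.mp ht)
  rw [zsmul_eq_mul, smul_eq_mul, mul_one, add_comm j t, Nat.add_sub_cancel_left]
  push_cast
  rw [← mul_assoc, ← mul_assoc, ← pow_add]
  congr 2
  rw [show t + d + j + d = t + j + 2 * d by ring, pow_add _ (t + j), pow_mul, neg_one_sq, one_pow,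
    mul_one]

theorem signedBinomialSum_succ (f : ℕ → R) (M j : ℕ) :
    signedBinomialSum f (M + 1) j = signedBinomialSum f M j + signedBinomialSum f M (j + 1) := by
  simp only [signedBinomialSum_eq_fwdDiff_iter, Function.iterate_succ_apply', fwdDiff]
  ring

@[simp]
theorem signedBinomialSum_zero (M j : ℕ) : signedBinomialSum (0 : ℕ → R) M j = 0 := by
  simp [signedBinomialSum]

end SignedBinomialSum

theorem Asum_eq_sum_signedBinomialSum (A : MvPolynomial (Fin 2) ℤ) (k i : ℕ) :
    Asum A k i = ∑ s ∈ range (k + 1),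
      signedBinomialSum (fun u => A.coeff (Finsupp.single 0 s + Finsupp.single 1 u)) (k - s) i :=
  rfl

theorem Asum_succ (A : MvPolynomial (Fin 2) ℤ) {m : ℕ} (hm : A.degreeOf 0 ≤ m) (j : ℕ) :
    Asum A (m + 1) j = Asum A m j + Asum A m (j + 1) := by
  have htop : (fun u => A.coeff (Finsupp.single 0 (m + 1) + Finsupp.single 1 u)) = 0 := by
    funext u
    exact MvPolynomial.coeff_eq_zero_of_degreeOf_lt (i := 0) (by simpa using Nat.lt_succ_of_le hm)
  simp only [Asum_eq_sum_signedBinomialSum, sum_range_succ _ (m + 1), htop,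
    signedBinomialSum_zero, add_zero, ← sum_add_distrib]
  refine sum_congr rfl fun s hs => ?_
  rw [Nat.sub_add_comm (mem_range_succ_iff.mp hs), signedBinomialSum_succ]

/-- **Statement 18.** If `k > deg_x(A)` and `i > 0`, then
`A_{k−1,i} = A_{k,i−1} − A_{k−1,i−1}`. -/
theorem Asum_recurrence (A : MvPolynomial (Fin 2) ℤ) (k i : ℕ)
    (hk : MvPolynomial.degreeOf 0 A < k) (hi : 0 < i) :
    Asum A (k - 1) i = Asum A k (i - 1) - Asum A (k - 1) (i - 1) := by
  obtain ⟨m, rfl⟩ : ∃ m, k = m + 1 := ⟨k - 1, by omega⟩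
  obtain ⟨j, rfl⟩ : ∃ j, i = j + 1 := ⟨i - 1, by omega⟩
  rw [Nat.add_sub_cancel, Nat.add_sub_cancel, Asum_succ A (Nat.lt_succ_iff.mp hk)]
  ring
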